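/- Let p be a prime and d ≥ 2 an integer with p ∤ d(d−1); let s be the least positive integer such that (d−1) | (p^s − 1). Let F be an algebraic closure of F_p and let c ∈ F be such that every c₀ ∈ F with c₀^{d−1} = c satisfies c₀^{p^s} ≠ c₀. Suppose x₀ ∈ F satisfies (x₀+1)^{d−1} = c·x₀^{d−1}, and set t₀ = (x₀+1)^d − c·x₀^d. Then the polynomial P₀(x) = (x+1)^d − c·x^d − t₀ ∈ F[x] has x₀ as a root of multiplicity exactly 2, and every other root of P₀ is simple; in particular, P₀ has exactly d−1 distinct roots in F. -/

import Mathlib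

/-!
Write `G = (X + 1)^(d-1) - c X^(d-1)`, so that `P₀' = d G`. A multiple root `y` of `P₀` is a
root of `G`, and on roots of `G` one has `(y + 1)^d - c y^d = c y^(d-1)`; hence
`y^(d-1) = x₀^(d-1)` and `(y + 1)^(d-1) = (x₀ + 1)^(d-1)`. If `y ≠ x₀`, then
`ζ = (y + 1)/(x₀ + 1)` and `η = y/x₀` are distinct `(d-1)`-th roots of unity, so they lie
in `𝔽_{p^s}`, and so does `x₀ = (1 - ζ)/(ζ - η)`; but then `(x₀ + 1)/x₀` is a `(d-1)`-th root
of `c` in `𝔽_{p^s}`. Thus `x₀` is the only multiple root. It is exactly double since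
`G'(x₀) = (d-1)((x₀ + 1)^(d-2) - c x₀^(d-2)) ≠ 0`, and counting roots with multiplicity
gives `d = 2 + (#roots - 1)`.
-/

theorem pow_eq_self_of_pow_eq_one {M : Type*} [Monoid M] {z : M} {n q : ℕ} (hz : z ^ n = 1)
    (hq : n ∣ q - 1) (hq₀ : q ≠ 0) : z ^ q = z := by
  obtain ⟨k, hk⟩ := hq
  rw [show q = n * k + 1 by omega, pow_succ, pow_mul, hz, one_pow, one_mul]

theorem RingHom.eq_self_of_pow_eq_of_add_one_pow_eq {F : Type*} [Field F] (φ : F →+* F)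
    {n : ℕ} (hφ : ∀ z : F, z ^ n = 1 → φ z = z) {x y : F} (hx : x ≠ 0) (hx₁ : x + 1 ≠ 0)
    (hxy : y ^ n = x ^ n) (hxy₁ : (y + 1) ^ n = (x + 1) ^ n) (hne : y ≠ x) : φ x = x := by
  set ζ := (y + 1) / (x + 1)
  set η := y / x
  have hζ : ζ ^ n = 1 := by rw [div_pow, hxy₁, div_self (pow_ne_zero _ hx₁)]
  have hη : η ^ n = 1 := by rw [div_pow, hxy, div_self (pow_ne_zero _ hx)]
  have hζx : ζ * (x + 1) = y + 1 := div_mul_cancel₀ _ hx₁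
  have hηx : η * x = y := div_mul_cancel₀ _ hx
  have hζη : ζ - η ≠ 0 := by
    intro h
    have hη₁ : η = 1 := by linear_combination hζx - hηx - (x + 1) * h
    exact hne (by rw [← hηx, hη₁, one_mul])
  -- `x` is a rational function of the two roots of unity `ζ`, `η`, hence fixed by `φ`.
  have hx_eq : x = (1 - ζ) / (ζ - η) := by
    rw [eq_div_iff hζη]
    linear_combination hζx - hηx
  rw [hx_eq, map_div₀, map_sub, map_sub, map_one, hφ ζ hζ, hφ η hη]

namespace Polynomial

section RootMultiplicity

variable {R : Type*} [CommRing R] {P : R[X]} {x : R}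

theorem rootMultiplicity_eq_one_of_not_isRoot_derivative (hP : P.IsRoot x)
    (hP' : ¬ (derivative P).IsRoot x) : rootMultiplicity x P = 1 := by
  have hP0 : P ≠ 0 := by rintro rfl; exact hP' (by simp)
  have hpos := (rootMultiplicity_pos hP0).mpr hP
  have hle := mt (one_lt_rootMultiplicity_iff_isRoot hP0).mp (by tauto)
  omega

theorem rootMultiplicity_eq_two_of_not_isRoot_derivative_derivative (hP : P.IsRoot x)
    (hP' : (derivative P).IsRoot x) (hP'' : ¬ (derivative (derivative P)).IsRoot x) :
    rootMultiplicity x P = 2 := by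
  have hP'0 : derivative P ≠ 0 := by intro h; exact hP'' (by simp [h])
  have hP0 : P ≠ 0 := by rintro rfl; exact hP'0 (by simp)
  have hgt := (one_lt_rootMultiplicity_iff_isRoot hP0).mpr ⟨hP, hP'⟩
  have hle := rootMultiplicity_sub_one_le_derivative_rootMultiplicity_of_ne_zero P x hP'0
  rw [rootMultiplicity_eq_one_of_not_isRoot_derivative hP' hP''] at hle
  omega

end RootMultiplicity

theorem ncard_setOf_isRoot_eq_natDegree_sub_one {F : Type*} [Field F] [IsAlgClosed F]
    {P : F[X]} {x₀ : F} (h₀ : rootMultiplicity x₀ P = 2)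
    (hsimple : ∀ y, P.IsRoot y → y ≠ x₀ → rootMultiplicity y P = 1) :
    {y | P.IsRoot y}.ncard = P.natDegree - 1 := by
  classical
  have hP : P ≠ 0 := by rintro rfl; simp at h₀
  have hroots : {y | P.IsRoot y} = ↑P.roots.toFinset := by
    ext y; simp [mem_roots hP]
  have hx₀ : x₀ ∈ P.roots.toFinset := by
    rw [Multiset.mem_toFinset, mem_roots hP, ← rootMultiplicity_pos hP, h₀]; omega
  have hcount : ∀ y ∈ P.roots.toFinset, P.roots.count y = 1 + if x₀ = y then 1 else 0 := by
    intro y hy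
    rw [count_roots]
    split_ifs with h
    · rw [← h, h₀]
    · exact hsimple y (by simpa [mem_roots hP] using hy) (Ne.symm h)
  have hdeg : P.natDegree = P.roots.toFinset.card + 1 := by
    rw [← IsAlgClosed.card_roots_eq_natDegree, ← Multiset.toFinset_sum_count_eq,
      Finset.sum_congr rfl hcount, Finset.sum_add_distrib, Finset.sum_ite_eq, if_pos hx₀,
      Finset.card_eq_sum_ones]
  rw [hroots, Set.ncard_coe_finset, hdeg, Nat.add_sub_cancel]

section AddOnePowSub

variable {R : Type*} [CommRing R]

noncomputable def addOnePowSub (c : R) (n : ℕ) : R[X] := (X + C 1) ^ n - C c * X ^ n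

@[simp]
theorem eval_addOnePowSub (c x : R) (n : ℕ) :
    (addOnePowSub c n).eval x = (x + 1) ^ n - c * x ^ n := by
  simp [addOnePowSub]

theorem derivative_addOnePowSub (c : R) (n : ℕ) :
    derivative (addOnePowSub c (n + 1)) = C ((n + 1 : ℕ) : R) * addOnePowSub c n := by
  simp only [addOnePowSub, derivative_sub, derivative_pow, derivative_add, derivative_X,
    derivative_C, derivative_mul]
  push_cast
  ring

theorem natDegree_addOnePowSub_sub_C [Nontrivial R] {c : R} (hc : c ≠ 1) (n : ℕ) (t : R) :
    (addOnePowSub c n - C t).natDegree = n := by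
  rw [natDegree_sub_C]
  refine natDegree_eq_of_le_of_coeff_ne_zero (by unfold addOnePowSub; compute_degree) ?_
  simpa [addOnePowSub, coeff_X_add_one_pow, coeff_X_pow, sub_eq_zero] using hc.symm

theorem eval_addOnePowSub_succ_of_isRoot {c x : R} {n : ℕ}
    (hx : (addOnePowSub c (n + 1)).IsRoot x) :
    (addOnePowSub c (n + 2)).eval x = c * x ^ (n + 1) := by
  rw [IsRoot, eval_addOnePowSub, sub_eq_zero] at hx
  rw [eval_addOnePowSub, pow_succ (x + 1), hx]
  ring

end AddOnePowSub

section Roots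

variable {F : Type*} [Field F] {c x₀ : F} {n : ℕ}

theorem not_isRoot_addOnePowSub_of_isRoot_succ (hc : c ≠ 0) (hx₀ : x₀ ≠ 0)
    (hG : (addOnePowSub c (n + 1)).IsRoot x₀) : ¬ (addOnePowSub c n).IsRoot x₀ := by
  rw [IsRoot, eval_addOnePowSub, sub_eq_zero] at hG ⊢
  intro h
  have : c * x₀ ^ n = 0 := by linear_combination hG - (x₀ + 1) * h
  simp [hc, hx₀] at this

theorem rootMultiplicity_addOnePowSub_sub_C_eq_two (hc : c ≠ 0) (hx₀ : x₀ ≠ 0)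
    (hG : (addOnePowSub c (n + 1)).IsRoot x₀) (hn₂ : ((n + 2 : ℕ) : F) ≠ 0)
    (hn₁ : ((n + 1 : ℕ) : F) ≠ 0) :
    rootMultiplicity x₀
      (addOnePowSub c (n + 2) - C ((addOnePowSub c (n + 2)).eval x₀)) = 2 := by
  have hH := not_isRoot_addOnePowSub_of_isRoot_succ hc hx₀ hG
  apply rootMultiplicity_eq_two_of_not_isRoot_derivative_derivative
  · simp [IsRoot]
  · rw [derivative_sub, derivative_C, sub_zero, derivative_addOnePowSub, IsRoot.def, eval_mul,
      hG.eq_zero, mul_zero]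
  · rw [derivative_sub, derivative_C, sub_zero, derivative_addOnePowSub, derivative_mul,
      derivative_C, zero_mul, zero_add, derivative_addOnePowSub, IsRoot.def, eval_mul, eval_mul,
      eval_C, eval_C]
    exact mul_ne_zero hn₂ (mul_ne_zero hn₁ hH)

theorem pow_succ_eq_of_isRoot_derivative_addOnePowSub_sub_C (hc : c ≠ 0)
    (hG : (addOnePowSub c (n + 1)).IsRoot x₀) (hn₂ : ((n + 2 : ℕ) : F) ≠ 0) {y : F}
    (hy : (addOnePowSub c (n + 2) - C ((addOnePowSub c (n + 2)).eval x₀)).IsRoot y)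
    (hy' : (derivative (addOnePowSub c (n + 2) - C ((addOnePowSub c (n + 2)).eval x₀))).IsRoot
      y) :
    y ^ (n + 1) = x₀ ^ (n + 1) ∧ (y + 1) ^ (n + 1) = (x₀ + 1) ^ (n + 1) := by
  rw [derivative_sub, derivative_C, sub_zero, derivative_addOnePowSub, IsRoot, eval_mul, eval_C,
    mul_eq_zero, or_iff_right hn₂] at hy'
  rw [IsRoot, eval_sub, eval_C, sub_eq_zero, eval_addOnePowSub_succ_of_isRoot hy',
    eval_addOnePowSub_succ_of_isRoot hG] at hy
  have hpow : y ^ (n + 1) = x₀ ^ (n + 1) := mul_left_cancel₀ hc hy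
  rw [IsRoot.def, eval_addOnePowSub, sub_eq_zero] at hG
  rw [eval_addOnePowSub, sub_eq_zero] at hy'
  exact ⟨hpow, by rw [hy', hG, hpow]⟩

theorem eq_of_isRoot_derivative_addOnePowSub_sub_C (φ : F →+* F)
    (hφ : ∀ z : F, z ^ (n + 1) = 1 → φ z = z) (hc : ∀ c₀ : F, c₀ ^ (n + 1) = c → φ c₀ ≠ c₀)
    (hx₀ : x₀ ≠ 0) (hG : (addOnePowSub c (n + 1)).IsRoot x₀) (hn₂ : ((n + 2 : ℕ) : F) ≠ 0)
    {y : F} (hy : (addOnePowSub c (n + 2) - C ((addOnePowSub c (n + 2)).eval x₀)).IsRoot y)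
    (hy' : (derivative (addOnePowSub c (n + 2) - C ((addOnePowSub c (n + 2)).eval x₀))).IsRoot
      y) :
    y = x₀ := by
  have hc₀ : c ≠ 0 := fun h ↦ hc 0 (by rw [h, zero_pow n.succ_ne_zero]) (map_zero φ)
  have hx₀₁ : x₀ + 1 ≠ 0 := fun h ↦ by simp [IsRoot, h, hc₀, hx₀] at hG
  obtain ⟨hpow, hpow₁⟩ := pow_succ_eq_of_isRoot_derivative_addOnePowSub_sub_C hc₀ hG hn₂ hy hy'
  by_contra hne
  have hφx₀ := φ.eq_self_of_pow_eq_of_add_one_pow_eq hφ hx₀ hx₀₁ hpow hpow₁ hne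
  rw [IsRoot.def, eval_addOnePowSub, sub_eq_zero] at hG
  refine hc ((x₀ + 1) / x₀) ?_ ?_
  · rw [div_pow, hG, mul_div_cancel_right₀ _ (pow_ne_zero _ hx₀)]
  · rw [map_div₀, map_add, map_one, hφx₀]

end Roots

end Polynomial

open Polynomial

theorem stmt_16_general (p : ℕ) [Fact p.Prime] (d : ℕ) (hpd : ¬ p ∣ d * (d - 1))
    (s : ℕ) (hs : IsLeast {s' : ℕ | 0 < s' ∧ (d - 1) ∣ (p ^ s' - 1)} s)
    (F : Type*) [Field F] [Algebra (ZMod p) F] [IsAlgClosure (ZMod p) F]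
    (c : F) (hc : ∀ c₀ : F, c₀ ^ (d - 1) = c → c₀ ^ p ^ s ≠ c₀)
    (x₀ : F) (hx₀ : (x₀ + 1) ^ (d - 1) = c * x₀ ^ (d - 1))
    (t₀ : F) (ht₀ : t₀ = (x₀ + 1) ^ d - c * x₀ ^ d)
    (P₀ : Polynomial F)
    (hP₀ : P₀ = (Polynomial.X + Polynomial.C 1) ^ d - Polynomial.C c * Polynomial.X ^ d
      - Polynomial.C t₀) :
    Polynomial.rootMultiplicity x₀ P₀ = 2 ∧
    (∀ y : F, P₀.IsRoot y → y ≠ x₀ → Polynomial.rootMultiplicity y P₀ = 1) ∧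
    {y : F | P₀.IsRoot y}.ncard = d - 1 := by
  have := IsAlgClosure.isAlgClosed (ZMod p) (K := F)
  have : CharP F p := charP_of_injective_algebraMap (algebraMap (ZMod p) F).injective p
  have hq : p ^ s ≠ 0 := pow_ne_zero _ (Fact.out : p.Prime).ne_zero
  have hc₁ : c ≠ 1 := fun h ↦ hc 1 (by rw [one_pow, h]) (one_pow _)
  obtain ⟨n, rfl⟩ : ∃ n, d = n + 2 := ⟨d - 2, by
    by_contra h
    rw [show d - 1 = 0 by omega, pow_zero, pow_zero, mul_one] at hx₀
    exact hc₁ hx₀.symm⟩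
  rw [show n + 2 - 1 = n + 1 from rfl] at hx₀ hc hs hpd
  have hc₀ : c ≠ 0 := fun h ↦ hc 0 (by rw [h, zero_pow n.succ_ne_zero]) (zero_pow hq)
  have hx₀₀ : x₀ ≠ 0 := by rintro rfl; simp at hx₀
  have hn₂ : ((n + 2 : ℕ) : F) ≠ 0 := by
    rw [Ne, CharP.cast_eq_zero_iff F p]; exact fun h ↦ hpd (h.mul_right _)
  have hn₁ : ((n + 1 : ℕ) : F) ≠ 0 := by
    rw [Ne, CharP.cast_eq_zero_iff F p]; exact fun h ↦ hpd (h.mul_left _)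
  have hG : (addOnePowSub c (n + 1)).IsRoot x₀ := by simp [hx₀]
  have hP : P₀ = addOnePowSub c (n + 2) - C ((addOnePowSub c (n + 2)).eval x₀) := by
    rw [hP₀, ht₀, eval_addOnePowSub]; rfl
  have hdouble : rootMultiplicity x₀ P₀ = 2 :=
    hP ▸ rootMultiplicity_addOnePowSub_sub_C_eq_two hc₀ hx₀₀ hG hn₂ hn₁
  have hsimple : ∀ y, P₀.IsRoot y → y ≠ x₀ → rootMultiplicity y P₀ = 1 := by
    rw [hP]
    refine fun y hy hne ↦ rootMultiplicity_eq_one_of_not_isRoot_derivative hy fun hy' ↦ hne ?_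
    exact eq_of_isRoot_derivative_addOnePowSub_sub_C (iterateFrobenius F p s)
      (fun z hz ↦ pow_eq_self_of_pow_eq_one hz hs.1.2 hq) hc hx₀₀ hG hn₂ hy hy'
  refine ⟨hdouble, hsimple, ?_⟩
  rw [ncard_setOf_isRoot_eq_natDegree_sub_one hdouble hsimple, hP,
    natDegree_addOnePowSub_sub_C hc₁]

/-- for `x₀` with `(x₀+1)^{d−1} = c·x₀^{d−1}` and
`t₀ = (x₀+1)^d − c·x₀^d`, the polynomial `P₀(x) = (x+1)^d − c·x^d − t₀` has `x₀` as a
root of multiplicity exactly 2, all other roots simple, and exactly `d − 1` distinct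
roots in the algebraic closure `F` of `F_p`. -/
theorem stmt_16 (p : ℕ) [Fact p.Prime] (d : ℕ) (hd : 2 ≤ d) (hpd : ¬ p ∣ d * (d - 1))
    (s : ℕ) (hs : IsLeast {s' : ℕ | 0 < s' ∧ (d - 1) ∣ (p ^ s' - 1)} s)
    (F : Type*) [Field F] [Algebra (ZMod p) F] [IsAlgClosure (ZMod p) F]
    (c : F) (hc : ∀ c₀ : F, c₀ ^ (d - 1) = c → c₀ ^ p ^ s ≠ c₀)
    (x₀ : F) (hx₀ : (x₀ + 1) ^ (d - 1) = c * x₀ ^ (d - 1))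
    (t₀ : F) (ht₀ : t₀ = (x₀ + 1) ^ d - c * x₀ ^ d)
    (P₀ : Polynomial F)
    (hP₀ : P₀ = (Polynomial.X + Polynomial.C 1) ^ d - Polynomial.C c * Polynomial.X ^ d
      - Polynomial.C t₀) :
    Polynomial.rootMultiplicity x₀ P₀ = 2 ∧
    (∀ y : F, P₀.IsRoot y → y ≠ x₀ → Polynomial.rootMultiplicity y P₀ = 1) ∧
    {y : F | P₀.IsRoot y}.ncard = d - 1 :=
  stmt_16_general p d hpd s hs F c hc x₀ hx₀ t₀ ht₀ P₀ hP₀
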